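/- arXiv:2012.09116 — 5 statements merged into one kernel-verified Lean document; each statement's English description precedes it below -/
import Mathlib

section
/- Fix k ∈ ℕ, ε > 0, T ∈ ℝ, a type Ω of datasets with a symmetric neighboring relation, and queries g_1,…,g_k : Ω → ℝ each of sensitivity at most 1. The mechanism that on input X outputs the result of AboveThreshold with parameter ε and threshold T applied to the values g_1(X),…,g_k(X) is ε-DP, i.e. (ε,0)-DP. -/
open MeasureTheory

/-- `(ε, δ)`-differential privacy of a mechanism `M : Ω → Measure α` with respect to a
neighboring relation `N`. -/
def IsDP {Ω : Type} {α : Type*} [MeasurableSpace α] (N : Ω → Ω → Prop)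
    (M : Ω → Measure α) (ε δ : ℝ) : Prop :=
  ∀ X X', N X X' → ∀ S : Set α, MeasurableSet S →
    M X S ≤ ENNReal.ofReal (Real.exp ε) * M X' S + ENNReal.ofReal δ

/-- The Laplace distribution on `ℝ` with scale `b`, given by the density
`x ↦ (1/(2b))·exp(-|x|/b)` with respect to Lebesgue measure. -/
noncomputable def laplace (b : ℝ) : Measure ℝ :=
  volume.withDensity fun x => ENNReal.ofReal (1 / (2 * b) * Real.exp (-|x| / b))

/-- The output space of `AboveThreshold` is `WithTop (Fin k)`, where `⊤` is the designated
failure symbol; since it is (countable) discrete, every set is measurable. -/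
instance (priority := low) {α : Type*} : MeasurableSpace (WithTop α) := ⊤

/-- The `AboveThreshold` mechanism with privacy parameter `ε` and threshold `T` on real
inputs `x 1, …, x k`: sample `ρ ~ Lap(2/ε)` and independent `ν i ~ Lap(4/ε)` and output the
smallest index `i` with `x i + ν i ≥ T + ρ` (`⊤` if no such index exists). -/
noncomputable def aboveThreshold {k : ℕ} (ε T : ℝ) (x : Fin k → ℝ) :
    Measure (WithTop (Fin k)) :=
  ((laplace (2 / ε)).prod (Measure.pi fun _ : Fin k => laplace (4 / ε))).map
    fun p => (Finset.univ.filter fun i : Fin k => T + p.1 ≤ x i + p.2 i).min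

/-!
If `|x i - x' i| ≤ 1` for all `i`, raising `ρ` by `1` and `ν o` by `2` carries every noise value
on which AboveThreshold outputs `o` on `x` to one on which it outputs `o` on `x'`: the queries
before `o` stay below the raised threshold and query `o` stays above it. Translating a Laplace
density of scale `b` by `c` multiplies it by at most `exp (|c| / b)`, so this shift costs a factor
`exp (ε / 2) · exp (2 ε / 4) = exp ε` on each output, and summing over outputs gives `ε`-DP.
-/

open scoped ENNReal NNReal

namespace MeasureTheory.Measure

theorem map_add_right_withDensity {G : Type*} [MeasurableSpace G] [AddGroup G] [MeasurableAdd G]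
    (μ : Measure G) [μ.IsAddRightInvariant] (f : G → ℝ≥0∞) (c : G) :
    (μ.withDensity f).map (· + c) = μ.withDensity fun x => f (x - c) := by
  ext s hs
  rw [map_apply (measurable_add_const c) hs, withDensity_apply _ (measurable_add_const c hs),
    withDensity_apply _ hs, ← (measurePreserving_add_right μ c).setLIntegral_comp_preimage_emb
      (MeasurableEquiv.addRight c).measurableEmbedding (fun x => f (x - c)) s]
  simp only [add_sub_cancel_right]

theorem map_add_right_withDensity_le {G : Type*} [MeasurableSpace G] [AddGroup G]
    [MeasurableAdd G] (μ : Measure G) [μ.IsAddRightInvariant] {f : G → ℝ≥0∞}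
    (hf : Measurable f) {c : G} {C : ℝ≥0} (h : ∀ x, f (x - c) ≤ C * f x) :
    (μ.withDensity f).map (· + c) ≤ C • μ.withDensity f := by
  rw [map_add_right_withDensity, show C • μ.withDensity f = (C : ℝ≥0∞) • μ.withDensity f from rfl,
    ← withDensity_smul _ hf]
  exact withDensity_mono (ae_of_all _ h)

theorem map_add_prod_le {G H : Type*} [MeasurableSpace G] [AddGroup G] [MeasurableAdd G]
    [MeasurableSpace H] [AddGroup H] [MeasurableAdd H] {μ : Measure G} {ν : Measure H}
    [SFinite μ] [SFinite ν] {a : G} {b : H} {C D : ℝ≥0}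
    (hμ : μ.map (· + a) ≤ C • μ) (hν : ν.map (· + b) ≤ D • ν) :
    (μ.prod ν).map (· + (a, b)) ≤ (C * D) • μ.prod ν := by
  rw [show (· + (a, b)) = Prod.map (· + a) (· + b) from rfl,
    ← map_prod_map _ _ (measurable_add_const a) (measurable_add_const b)]
  calc (μ.map (· + a)).prod (ν.map (· + b)) ≤ (C • μ).prod (D • ν) := prod_mono hμ hν
    _ = (C * D) • μ.prod ν := by rw [prod_smul_left, prod_smul_right, smul_smul]

variable {ι : Type*} [Fintype ι] {α : ι → Type*} [∀ i, MeasurableSpace (α i)]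

theorem pi_mono {μ ν : ∀ i, Measure (α i)} (h : ∀ i, μ i ≤ ν i) :
    Measure.pi μ ≤ Measure.pi ν := by
  refine le_iff.mpr fun s hs => ?_
  rw [pi_def, pi_def, toMeasure_apply _ _ hs, toMeasure_apply _ _ hs]
  refine OuterMeasure.le_pi.mpr (fun t _ => ?_) s
  exact (OuterMeasure.pi_pi_le _ t).trans (Finset.prod_le_prod' fun i _ => le_iff'.mp (h i) _)

theorem pi_nnreal_smul (μ : ∀ i, Measure (α i)) [∀ i, SigmaFinite (μ i)] (C : ι → ℝ≥0) :
    Measure.pi (fun i => C i • μ i) = (∏ i, C i) • Measure.pi μ := by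
  refine pi_eq fun s hs => ?_
  simp only [coe_nnreal_smul_apply, pi_pi, ENNReal.ofNNReal_finsetProd, Finset.prod_mul_distrib]

theorem map_add_pi_le {G : ι → Type*} [∀ i, MeasurableSpace (G i)] [∀ i, AddGroup (G i)]
    [∀ i, MeasurableAdd (G i)] {μ : ∀ i, Measure (G i)} [∀ i, SigmaFinite (μ i)]
    {c : ∀ i, G i} {C : ι → ℝ≥0} (h : ∀ i, (μ i).map (· + c i) ≤ C i • μ i) :
    (Measure.pi μ).map (· + c) ≤ (∏ i, C i) • Measure.pi μ := by
  have (i : ι) : SigmaFinite ((μ i).map (· + c i)) :=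
    (MeasurableEquiv.addRight (c i)).sigmaFinite_map
  calc (Measure.pi μ).map (fun x i => x i + c i)
      = Measure.pi fun i => (μ i).map (· + c i) :=
        pi_map_pi fun i => (measurable_add_const (c i)).aemeasurable
    _ ≤ Measure.pi fun i => C i • μ i := pi_mono h
    _ = (∏ i, C i) • Measure.pi μ := pi_nnreal_smul μ C

theorem le_smul_of_forall_singleton {α : Type*} [MeasurableSpace α] [Countable α]
    [MeasurableSingletonClass α] {μ ν : Measure α} {C : ℝ≥0∞} (h : ∀ a, μ {a} ≤ C * ν {a}) :
    μ ≤ C • ν := by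
  refine le_iff.mpr fun s hs => ?_
  rw [← sum_smul_dirac μ, ← sum_smul_dirac ν]
  simp only [sum_apply _ hs, smul_apply, smul_eq_mul, ← ENNReal.tsum_mul_left, ← mul_assoc]
  exact ENNReal.tsum_le_tsum fun a => mul_le_mul_left (h a) _

end MeasureTheory.Measure

instance (b : ℝ) : SigmaFinite (laplace b) := by
  unfold laplace; infer_instance

theorem map_add_laplace_le {b : ℝ} (hb : 0 < b) (c : ℝ) :
    (laplace b).map (· + c) ≤ (Real.exp (|c| / b)).toNNReal • laplace b := by
  refine Measure.map_add_right_withDensity_le volume (by fun_prop) fun x => ?_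
  rw [← ENNReal.ofReal.eq_def, ← ENNReal.ofReal_mul (Real.exp_nonneg _)]
  refine ENNReal.ofReal_le_ofReal ?_
  rw [mul_left_comm, ← Real.exp_add, ← add_div]
  gcongr
  linarith [abs_sub_abs_le_abs_sub x c]

theorem map_add_laplace_prod_pi_le {ι : Type*} [Fintype ι] {b₁ b₂ : ℝ} (hb₁ : 0 < b₁)
    (hb₂ : 0 < b₂) (a : ℝ) (c : ι → ℝ) :
    ((laplace b₁).prod (Measure.pi fun _ : ι => laplace b₂)).map (· + (a, c)) ≤
      (Real.exp (|a| / b₁ + ∑ i, |c i| / b₂)).toNNReal •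
        (laplace b₁).prod (Measure.pi fun _ : ι => laplace b₂) := by
  have h := Measure.map_add_prod_le (map_add_laplace_le hb₁ a)
    (Measure.map_add_pi_le fun i => map_add_laplace_le hb₂ (c i))
  rwa [Real.exp_add, Real.exp_sum, Real.toNNReal_mul (Real.exp_nonneg _),
    Real.toNNReal_prod_of_nonneg fun i _ => Real.exp_nonneg _]

theorem Finset.min_filter_eq_of_imp {ι : Type*} [LinearOrder ι] {s : Finset ι} {P Q : ι → Prop}
    [DecidablePred P] [DecidablePred Q] {o : WithTop ι} (h : (s.filter P).min = o)
    (hPQ : ∀ i : ι, ↑i = o → P i → Q i) (hQP : ∀ j : ι, ↑j < o → Q j → P j) :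
    (s.filter Q).min = o := by
  apply le_antisymm
  · cases o with
    | top => exact le_top
    | coe i =>
      have hi := Finset.mem_filter.mp (Finset.mem_of_min h)
      exact Finset.min_le (Finset.mem_filter.mpr ⟨hi.1, hPQ i rfl hi.2⟩)
  · refine Finset.le_min fun j hj => not_lt.mp fun hjo => ?_
    have hj := Finset.mem_filter.mp hj
    have := Finset.min_le (Finset.mem_filter.mpr ⟨hj.1, hQP j hjo hj.2⟩)
    exact (h ▸ this).not_gt hjo

theorem measurable_min_filter {α ι : Type*} [MeasurableSpace α] [Fintype ι] [LinearOrder ι]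
    [MeasurableSpace (WithTop ι)] {P : ι → α → Prop} [∀ i, DecidablePred (P i)]
    (hP : ∀ i, MeasurableSet {a | P i a}) :
    Measurable fun a => (Finset.univ.filter fun i => P i a).min := by
  classical
  convert (Measurable.of_discrete (f := fun b : ι → Prop => (Finset.univ.filter b).min)).comp
    (measurable_pi_lambda _ fun i => measurableSet_setOfPred.mp (hP i))
  simp only [Function.comp_apply]
  congr!

section AboveThreshold

variable {k : ℕ}

noncomputable def aboveThresholdIndex (T : ℝ) (x : Fin k → ℝ) (p : ℝ × (Fin k → ℝ)) :
    WithTop (Fin k) :=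
  (Finset.univ.filter fun i : Fin k => T + p.1 ≤ x i + p.2 i).min

theorem measurable_aboveThresholdIndex (T : ℝ) (x : Fin k → ℝ) :
    Measurable (aboveThresholdIndex T x) :=
  measurable_min_filter fun i => measurableSet_le (by fun_prop) (by fun_prop)

def aboveThresholdShift (o : WithTop (Fin k)) : ℝ × (Fin k → ℝ) :=
  (1, fun j => if (j : WithTop (Fin k)) = o then 2 else 0)

theorem aboveThresholdIndex_add_shift {T : ℝ} {x x' : Fin k → ℝ}
    (hx : ∀ i, |x i - x' i| ≤ 1) {p : ℝ × (Fin k → ℝ)} {o : WithTop (Fin k)}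
    (h : aboveThresholdIndex T x p = o) :
    aboveThresholdIndex T x' (p + aboveThresholdShift o) = o := by
  refine Finset.min_filter_eq_of_imp h (fun i hi hP => ?_) (fun j hj hQ => ?_)
  · simp only [aboveThresholdShift, Prod.fst_add, Prod.snd_add, Pi.add_apply, hi, if_true]
    linarith [abs_le.mp (hx i)]
  · simp only [aboveThresholdShift, Prod.fst_add, Prod.snd_add, Pi.add_apply, hj.ne,
      if_false] at hQ
    linarith [abs_le.mp (hx j)]

theorem aboveThresholdShift_cost_le {ε : ℝ} (hε : 0 < ε) (o : WithTop (Fin k)) :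
    |(aboveThresholdShift o).1| / (2 / ε) + ∑ j, |(aboveThresholdShift o).2 j| / (4 / ε) ≤ ε := by
  have hfst : |(aboveThresholdShift o).1| / (2 / ε) = ε / 2 := by simp [aboveThresholdShift]
  have hsnd : ∑ j, |(aboveThresholdShift o).2 j| / (4 / ε) ≤ ε / 2 := by
    cases o with
    | top => simp [aboveThresholdShift]; positivity
    | coe i =>
      simp only [aboveThresholdShift, WithTop.coe_inj, apply_ite (|·|), ite_div, abs_zero,
        zero_div, Finset.sum_ite_eq', Finset.mem_univ, if_true]
      rw [abs_two, div_div_eq_mul_div]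
      linarith
  linarith

theorem aboveThreshold_singleton_le {ε : ℝ} (hε : 0 < ε) (T : ℝ) {x x' : Fin k → ℝ}
    (hx : ∀ i, |x i - x' i| ≤ 1) (o : WithTop (Fin k)) :
    aboveThreshold ε T x {o} ≤ ENNReal.ofReal (Real.exp ε) * aboveThreshold ε T x' {o} := by
  set μ := (laplace (2 / ε)).prod (Measure.pi fun _ : Fin k => laplace (4 / ε))
  set v := aboveThresholdShift o
  have hmap (y : Fin k → ℝ) : aboveThreshold ε T y {o} = μ (aboveThresholdIndex T y ⁻¹' {o}) :=
    Measure.map_apply (measurable_aboveThresholdIndex T y) (measurableSet_singleton o)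
  calc aboveThreshold ε T x {o} = μ (aboveThresholdIndex T x ⁻¹' {o}) := hmap x
    _ ≤ μ ((· + v) ⁻¹' (aboveThresholdIndex T x' ⁻¹' {o})) :=
        measure_mono fun p hp => aboveThresholdIndex_add_shift hx hp
    _ ≤ μ.map (· + v) (aboveThresholdIndex T x' ⁻¹' {o}) :=
        Measure.le_map_apply (measurable_add_const v).aemeasurable _
    _ ≤ ((Real.exp (|v.1| / (2 / ε) + ∑ j, |v.2 j| / (4 / ε))).toNNReal • μ)
          (aboveThresholdIndex T x' ⁻¹' {o}) :=
        map_add_laplace_prod_pi_le (by positivity) (by positivity) v.1 v.2 _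
    _ ≤ ENNReal.ofReal (Real.exp ε) * μ (aboveThresholdIndex T x' ⁻¹' {o}) := by
        rw [Measure.coe_nnreal_smul_apply]
        gcongr
        exact ENNReal.ofReal_le_ofReal (Real.exp_le_exp.mpr (aboveThresholdShift_cost_le hε o))
    _ = ENNReal.ofReal (Real.exp ε) * aboveThreshold ε T x' {o} := by rw [hmap x']

end AboveThreshold

theorem isDP_zero_of_le_smul {Ω : Type} {α : Type*} [MeasurableSpace α] {N : Ω → Ω → Prop}
    {M : Ω → Measure α} {ε : ℝ} (h : ∀ X X', N X X' → M X ≤ ENNReal.ofReal (Real.exp ε) • M X') :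
    IsDP N M ε 0 := fun X X' hN S _ => by
  simpa using Measure.le_iff'.mp (h X X' hN) S

theorem aboveThreshold_is_DP_general (k : ℕ) (ε : ℝ) (hε : 0 < ε) (T : ℝ)
    (Ω : Type) (N : Ω → Ω → Prop)
    (g : Fin k → Ω → ℝ) (hg : ∀ i X X', N X X' → |g i X - g i X'| ≤ 1) :
    IsDP N (fun X => aboveThreshold ε T fun i => g i X) ε 0 :=
  isDP_zero_of_le_smul fun X X' hN => Measure.le_smul_of_forall_singleton fun o =>
    aboveThreshold_singleton_le hε T (fun i => hg i X X' hN) o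

/-- The `AboveThreshold` mechanism applied to `k` queries of sensitivity at most one
is `ε`-DP. -/
theorem aboveThreshold_is_DP (k : ℕ) (ε : ℝ) (hε : 0 < ε) (T : ℝ)
    (Ω : Type) (N : Ω → Ω → Prop) (hsym : ∀ X X', N X X' → N X' X)
    (g : Fin k → Ω → ℝ) (hg : ∀ i X X', N X X' → |g i X - g i X'| ≤ 1) :
    IsDP N (fun X => aboveThreshold ε T fun i => g i X) ε 0 :=
  aboveThreshold_is_DP_general k ε hε T Ω N g hg
end

section
/- Fix k ∈ ℕ, ε > 0, T ∈ ℝ, a type Ω of datasets with a symmetric neighboring relation, and queries f_1,…,f_k : Ω → ℝ each of sensitivity at most 1. The mechanism that on input X outputs the result of PermutedAboveThreshold with parameter ε and threshold T applied to the values f_1(X),…,f_k(X) is ε-DP, i.e. (ε,0)-DP. -/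
open MeasureTheory

/-- Permutations form a (finite) discrete measurable space. -/
instance (priority := low) {α : Type*} : MeasurableSpace (Equiv.Perm α) := ⊤

/-- The `PermutedAboveThreshold` mechanism with privacy parameter `ε` and threshold `T`:
sample a uniformly random permutation `π` of `Fin k` (independent of everything else),
run `AboveThreshold` on `x (π 1), …, x (π k)` to obtain an index `i`, and return
`π⁻¹ i` (returning the failure symbol `⊤` if `AboveThreshold` fails). -/
noncomputable def permutedAboveThreshold {k : ℕ} (ε T : ℝ) (x : Fin k → ℝ) :
    Measure (WithTop (Fin k)) :=
  ((PMF.uniformOfFintype (Equiv.Perm (Fin k))).toMeasure).bind fun π =>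
    (aboveThreshold ε T fun j => x (π j)).map (WithTop.map fun i => π.symm i)

/-! Fix an output `y`. Shifting the noise by `ρ ↦ ρ - 1` (and `ν i ↦ ν i - 2` when `y = i`)
costs a density factor at most `e^ε`, because the Laplace scales are `2/ε` and `4/ε`; and for
inputs `x, x'` that differ by at most `1` coordinatewise, if the shifted noise makes the run on
`x` output `y`, then the unshifted noise makes the run on `x'` output `y`. Hence
`P[AT(x) = y] ≤ e^ε P[AT(x') = y]`, which adds up over any set of outputs. PermutedAboveThreshold
is a mixture, over permutations `σ`, of AboveThreshold on the permuted inputs (still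
`1`-close) followed by a fixed relabelling, so the bound passes to it. -/

open Real ENNReal

namespace MeasureTheory.Measure

theorem withDensity_le_smul_map_add {G : Type*} [MeasurableSpace G] [AddGroup G]
    [MeasurableAdd G] (μ : Measure G) [μ.IsAddRightInvariant] {D : G → ℝ≥0∞} {c : ℝ≥0∞}
    (hc : c ≠ ∞) (s : G) (hD : ∀ x, D (x + s) ≤ c * D x) :
    μ.withDensity D ≤ c • (μ.withDensity D).map (· + s) := by
  refine Measure.le_iff.2 fun A hA => ?_
  have hA' : MeasurableSet ((· + s) ⁻¹' A) := measurable_add_const s hA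
  rw [Measure.smul_apply, smul_eq_mul, Measure.map_apply (measurable_add_const s) hA,
    withDensity_apply _ hA, withDensity_apply _ hA', ← lintegral_indicator hA,
    ← lintegral_indicator hA', ← lintegral_add_right_eq_self _ s, ← lintegral_const_mul' _ _ hc]
  refine lintegral_mono fun x => ?_
  by_cases hx : x + s ∈ A <;> simp [Set.indicator, hx, hD x]

theorem prod_le_smul_map_prodMap {α β : Type*} [MeasurableSpace α] [MeasurableSpace β]
    {μ : Measure α} {ν : Measure β} [SFinite μ] [SFinite ν] {f : α → α} {g : β → β}
    (hf : Measurable f) (hg : Measurable g) {c d : ℝ≥0∞} (hμ : μ ≤ c • μ.map f)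
    (hν : ν ≤ d • ν.map g) :
    μ.prod ν ≤ (c * d) • (μ.prod ν).map (Prod.map f g) :=
  calc μ.prod ν ≤ (c • μ.map f).prod (d • ν.map g) := prod_mono hμ hν
    _ = (c * d) • (μ.prod ν).map (Prod.map f g) := by
      rw [prod_smul_left, prod_smul_right, smul_smul, map_prod_map _ _ hf hg]

theorem pi_le_smul_map_add_single {G : Type*} [MeasurableSpace G] [AddGroup G]
    [MeasurableAdd G] {μ : Measure G} [SigmaFinite μ] {c : ℝ≥0∞} {s : G}
    (h : μ ≤ c • μ.map (· + s)) {k : ℕ} (i : Fin k) :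
    Measure.pi (fun _ : Fin k => μ) ≤ c • (Measure.pi fun _ => μ).map (· + Pi.single i s) := by
  cases k with
  | zero => exact i.elim0
  | succ n =>
  set e := MeasurableEquiv.piFinSuccAbove (fun _ : Fin (n + 1) => G) i
  have hpi : Measure.pi (fun _ => μ) = (μ.prod (Measure.pi fun _ : Fin n => μ)).map e.symm :=
    (measurePreserving_piFinSuccAbove (fun _ => μ) i).symm.map_eq.symm
  have hshift : (· + Pi.single i s) ∘ e.symm = e.symm ∘ Prod.map (· + s) id := by
    ext ⟨a, w⟩ j
    change Fin.insertNth (α := fun _ => G) i a w j + Pi.single (M := fun _ => G) i s j =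
      Fin.insertNth (α := fun _ => G) i (a + s) w j
    rcases Fin.eq_self_or_eq_succAbove i j with rfl | ⟨m, rfl⟩ <;> simp
  calc Measure.pi (fun _ => μ)
      ≤ ((c • μ.map (· + s)).prod ((Measure.pi fun _ : Fin n => μ).map id)).map e.symm := by
        rw [hpi, Measure.map_id]; exact map_mono (prod_mono h le_rfl) e.symm.measurable
    _ = c • (Measure.pi fun _ => μ).map (· + Pi.single i s) := by
        rw [prod_smul_left, Measure.map_smul,
          map_prod_map _ _ (measurable_add_const s) measurable_id,
          map_map e.symm.measurable (by fun_prop), ← hshift,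
          ← map_map (measurable_add_const _) e.symm.measurable, ← hpi]

theorem le_smul_of_forall_singleton_le {α : Type*} [MeasurableSpace α] [Countable α]
    [MeasurableSingletonClass α] {μ ν : Measure α} {c : ℝ≥0∞} (h : ∀ a, μ {a} ≤ c * ν {a}) :
    μ ≤ c • ν := by
  refine Measure.le_iff.2 fun S hS => ?_
  rw [Measure.smul_apply, smul_eq_mul, ← tsum_indicator_apply_singleton μ S hS,
    ← tsum_indicator_apply_singleton ν S hS, ← ENNReal.tsum_mul_left]
  refine ENNReal.tsum_le_tsum fun a => ?_
  by_cases ha : a ∈ S <;> simp [ha, h a]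

theorem map_apply_le_of_le_smul_map {α β : Type*} [MeasurableSpace α] [MeasurableSpace β]
    {μ : Measure α} {F F' : α → β} (hF : Measurable F) (hF' : Measurable F') {Φ : α → α}
    (hΦ : Measurable Φ) {c : ℝ≥0∞} (hμ : μ ≤ c • μ.map Φ) {S : Set β} (hS : MeasurableSet S)
    (hFΦ : ∀ p, F (Φ p) ∈ S → F' p ∈ S) :
    μ.map F S ≤ c * μ.map F' S := by
  rw [Measure.map_apply hF hS, Measure.map_apply hF' hS]
  calc μ (F ⁻¹' S) ≤ (c • μ.map Φ) (F ⁻¹' S) := hμ _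
    _ = c * μ (Φ ⁻¹' (F ⁻¹' S)) := by rw [Measure.smul_apply, Measure.map_apply hΦ (hF hS)]; rfl
    _ ≤ c * μ (F' ⁻¹' S) := by gcongr; exact fun p => hFΦ p

theorem bind_le_smul_bind {α β : Type*} [MeasurableSpace α] [MeasurableSpace β]
    {μ : Measure α} {κ κ' : α → Measure β} (hκ : Measurable κ) (hκ' : Measurable κ')
    {c : ℝ≥0∞} (h : ∀ a, κ a ≤ c • κ' a) : μ.bind κ ≤ c • μ.bind κ' := by
  refine Measure.le_iff.2 fun S hS => ?_
  rw [Measure.smul_apply, smul_eq_mul, bind_apply hS hκ.aemeasurable,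
    bind_apply hS hκ'.aemeasurable]
  calc ∫⁻ a, κ a S ∂μ ≤ ∫⁻ a, c * κ' a S ∂μ := lintegral_mono fun a => h a S
    _ = c * ∫⁻ a, κ' a S ∂μ := lintegral_const_mul _ ((measurable_coe hS).comp hκ')

end MeasureTheory.Measure

theorem isDP_of_le_smul {Ω : Type} {α : Type*} [MeasurableSpace α] {N : Ω → Ω → Prop}
    {M : Ω → Measure α} {ε : ℝ} (h : ∀ X X', N X X' → M X ≤ ENNReal.ofReal (exp ε) • M X') :
    IsDP N M ε 0 := fun X X' hN S _ => by simpa using h X X' hN S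

instance inst_s3 (b : ℝ) : SigmaFinite (laplace b) := by
  unfold laplace; infer_instance

theorem laplace_le_smul_map_add {b : ℝ} (hb : 0 < b) (s : ℝ) :
    laplace b ≤ ENNReal.ofReal (exp (|s| / b)) • (laplace b).map (· + s) :=
  Measure.withDensity_le_smul_map_add volume ofReal_ne_top s fun x => by
    rw [← ENNReal.ofReal_mul (exp_nonneg _)]
    refine ENNReal.ofReal_le_ofReal ?_
    rw [mul_left_comm, ← exp_add, ← add_div]
    have h := abs_add_le (x + s) (-s)
    rw [abs_neg, add_neg_cancel_right] at h
    gcongr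
    linarith

section AboveThreshold

variable {k : ℕ} {ε : ℝ}

noncomputable def aboveThresholdNoise (k : ℕ) (ε : ℝ) : Measure (ℝ × (Fin k → ℝ)) :=
  (laplace (2 / ε)).prod (Measure.pi fun _ : Fin k => laplace (4 / ε))

theorem aboveThresholdNoise_le_smul_map_shift_threshold (hε : 0 < ε) :
    aboveThresholdNoise k ε ≤
      ENNReal.ofReal (exp ε) • (aboveThresholdNoise k ε).map (Prod.map (· + -1) id) := by
  have hρ := laplace_le_smul_map_add (b := 2 / ε) (by positivity) (-1)
  unfold aboveThresholdNoise
  have hν : Measure.pi (fun _ : Fin k => laplace (4 / ε)) ≤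
      (1 : ℝ≥0∞) • (Measure.pi fun _ : Fin k => laplace (4 / ε)).map id := by
    rw [Measure.map_id, one_smul]
  refine (Measure.prod_le_smul_map_prodMap (measurable_add_const _) measurable_id hρ hν).trans ?_
  rw [mul_one]
  refine IsOrderedSMul.smul_le_smul_right _ _ (ofReal_le_ofReal (exp_le_exp.2 ?_)) _
  rw [abs_neg, abs_one, one_div_div]
  linarith

theorem aboveThresholdNoise_le_smul_map_shift_index (hε : 0 < ε) (i : Fin k) :
    aboveThresholdNoise k ε ≤ ENNReal.ofReal (exp ε) •
      (aboveThresholdNoise k ε).map (Prod.map (· + -1) (· + Pi.single i (-2))) := by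
  have hρ := laplace_le_smul_map_add (b := 2 / ε) (by positivity) (-1)
  have hν := Measure.pi_le_smul_map_add_single
    (laplace_le_smul_map_add (b := 4 / ε) (by positivity) (-2)) i
  unfold aboveThresholdNoise
  convert Measure.prod_le_smul_map_prodMap (measurable_add_const _) (measurable_add_const _)
    hρ hν using 2
  rw [← ENNReal.ofReal_mul (exp_nonneg _), ← exp_add, abs_neg, abs_neg, abs_one, abs_two]
  congr 2
  field_simp
  ring

noncomputable def firstAboveThreshold (T : ℝ) (x : Fin k → ℝ) (p : ℝ × (Fin k → ℝ)) :
    WithTop (Fin k) :=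
  (Finset.univ.filter fun i => T + p.1 ≤ x i + p.2 i).min

theorem aboveThreshold_eq_map (ε T : ℝ) (x : Fin k → ℝ) :
    aboveThreshold ε T x = (aboveThresholdNoise k ε).map (firstAboveThreshold T x) := rfl

theorem measurable_firstAboveThreshold (T : ℝ) (x : Fin k → ℝ) :
    Measurable (firstAboveThreshold T x) := by
  classical
  have hP : Measurable fun p : ℝ × (Fin k → ℝ) => fun i => T + p.1 ≤ x i + p.2 i :=
    measurable_pi_lambda _ fun i =>
      measurableSet_setOfPred.mp (measurableSet_le (by fun_prop) (by fun_prop))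
  convert (measurable_of_countable fun s : Fin k → Prop => (Finset.univ.filter s).min).comp hP
  funext p
  unfold firstAboveThreshold
  congr

variable {T : ℝ} {x x' : Fin k → ℝ}

theorem firstAboveThreshold_eq_top_of_shift (hx : ∀ j, |x j - x' j| ≤ 1)
    {p : ℝ × (Fin k → ℝ)} (h : firstAboveThreshold T x (p.1 + -1, p.2) = ⊤) :
    firstAboveThreshold T x' p = ⊤ := by
  simp only [firstAboveThreshold, Finset.min_eq_top, Finset.filter_eq_empty_iff,
    Finset.mem_univ, true_implies, not_le] at h ⊢
  intro j
  linarith [@h j, (abs_le.mp (hx j)).1]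

theorem firstAboveThreshold_eq_coe_of_shift (hx : ∀ j, |x j - x' j| ≤ 1) {i : Fin k}
    {p : ℝ × (Fin k → ℝ)} (h : firstAboveThreshold T x (p.1 + -1, p.2 + Pi.single i (-2)) = i) :
    firstAboveThreshold T x' p = i := by
  unfold firstAboveThreshold at h ⊢
  have his := Finset.mem_of_min h
  have hi : i ∈ Finset.univ.filter fun j => T + p.1 ≤ x' j + p.2 j := by
    simp only [Finset.mem_filter, Finset.mem_univ, true_and, Pi.add_apply,
      Pi.single_eq_same] at his ⊢
    linarith [(abs_le.mp (hx i)).2]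
  refine le_antisymm (Finset.min_le hi) (Finset.le_min fun j hj => ?_)
  rcases eq_or_ne j i with rfl | hji
  · rfl
  rw [← h]
  refine Finset.min_le ?_
  simp only [Finset.mem_filter, Finset.mem_univ, true_and, Pi.add_apply,
    Pi.single_eq_of_ne hji] at hj ⊢
  linarith [(abs_le.mp (hx j)).1]

end AboveThreshold

section Mechanisms

variable {k : ℕ} {ε : ℝ} (hε : 0 < ε) (T : ℝ) {x x' : Fin k → ℝ}
include hε

theorem aboveThreshold_le_smul (hx : ∀ j, |x j - x' j| ≤ 1) :
    aboveThreshold ε T x ≤ ENNReal.ofReal (exp ε) • aboveThreshold ε T x' := by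
  refine Measure.le_smul_of_forall_singleton_le fun y => ?_
  rw [aboveThreshold_eq_map, aboveThreshold_eq_map]
  cases y with
  | top =>
    exact Measure.map_apply_le_of_le_smul_map (measurable_firstAboveThreshold T x)
      (measurable_firstAboveThreshold T x') (by fun_prop)
      (aboveThresholdNoise_le_smul_map_shift_threshold hε) (measurableSet_singleton _)
      fun _ => firstAboveThreshold_eq_top_of_shift hx
  | coe i =>
    exact Measure.map_apply_le_of_le_smul_map (measurable_firstAboveThreshold T x)
      (measurable_firstAboveThreshold T x') (by fun_prop)
      (aboveThresholdNoise_le_smul_map_shift_index hε i) (measurableSet_singleton _)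
      fun _ => firstAboveThreshold_eq_coe_of_shift hx

theorem permutedAboveThreshold_le_smul (hx : ∀ j, |x j - x' j| ≤ 1) :
    permutedAboveThreshold ε T x ≤ ENNReal.ofReal (exp ε) • permutedAboveThreshold ε T x' :=
  Measure.bind_le_smul_bind measurable_from_top measurable_from_top fun σ => by
    rw [← Measure.map_smul]
    exact Measure.map_mono (aboveThreshold_le_smul hε T fun j => hx (σ j))
      (measurable_of_countable _)

end Mechanisms

theorem permutedAboveThreshold_is_DP_general (k : ℕ) (ε : ℝ) (hε : 0 < ε) (T : ℝ)
    (Ω : Type) (N : Ω → Ω → Prop)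
    (f : Fin k → Ω → ℝ) (hf : ∀ i X X', N X X' → |f i X - f i X'| ≤ 1) :
    IsDP N (fun X => permutedAboveThreshold ε T fun i => f i X) ε 0 :=
  isDP_of_le_smul fun X X' hN => permutedAboveThreshold_le_smul hε T fun i => hf i X X' hN

/-- The `PermutedAboveThreshold` mechanism applied to `k` queries of sensitivity at most
one is `ε`-DP. -/
theorem permutedAboveThreshold_is_DP (k : ℕ) (ε : ℝ) (hε : 0 < ε) (T : ℝ)
    (Ω : Type) (N : Ω → Ω → Prop) (hsym : ∀ X X', N X X' → N X' X)
    (f : Fin k → Ω → ℝ) (hf : ∀ i X X', N X X' → |f i X - f i X'| ≤ 1) :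
    IsDP N (fun X => permutedAboveThreshold ε T fun i => f i X) ε 0 :=
  permutedAboveThreshold_is_DP_general k ε hε T Ω N f hf
end

section
/- Let ε ∈ (0,1], δ ∈ (0,0.5], and let k ≥ 3 be an integer. Set κ = 0.9, λ = 0.95, L = ⌈10·log(log k)/log(1/κ)⌉, ε_0 = ε/(1000·√(log(1/δ))), and for each ℓ with 1 ≤ ℓ ≤ L set m_ℓ = κ^ℓ·k and ε_ℓ = ε_0/(√k·√(ℓ·λ^ℓ)). Then Σ_{ℓ=1}^{L} [√(2·m_ℓ·log(2^ℓ/δ))·ε_ℓ + m_ℓ·ε_ℓ·(e^{ε_ℓ} − 1)] ≤ ε, and Σ_{ℓ=1}^{L} 0.5^ℓ·δ ≤ δ. -/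
/-!
Write `ε_ℓ` for the per-stage budget. Since `m_ℓ ε_ℓ² = ε₀² (κ/λ)^ℓ / ℓ` and
`log (2^ℓ/δ) ≤ 2ℓ log (1/δ)`, the square-root term of stage `ℓ` is at most
`2 ε₀ √(log (1/δ)) ρ^ℓ = (ε/500) ρ^ℓ` for any `ρ` with `κ/λ ≤ ρ²`, e.g. `ρ = 39/40`.
The choice of `L` makes `λ^L ≥ λ (log k)^{-5}` (because `λ² ≥ κ`), and `(log k)^5 ≤ 5^5 k`,
so `k ℓ λ^ℓ ≥ 1/3300 ≥ ε₀²`; hence `ε_ℓ ≤ 1`, `e^{ε_ℓ} - 1 ≤ 2 ε_ℓ`, and the second term is at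
most `2 ε₀² ρ^ℓ`. Summing the geometric series gives at most `39 (ε/500 + 2 ε₀²) ≤ ε`.
-/

open Real Finset

lemma sum_Icc_one_pow_le {r : ℝ} (h0 : 0 ≤ r) (h1 : r < 1) (L : ℕ) :
    ∑ ℓ ∈ Icc 1 L, r ^ ℓ ≤ r / (1 - r) := by
  simpa [← Ico_add_one_right_eq_Icc] using geom_sum_Ico_le_of_lt_one (m := 1) (n := L + 1) h0 h1

lemma sqrt_mul_add_mul_exp_sub_one_le {m a x : ℝ} (hm : 0 ≤ m) (hx0 : 0 ≤ x) (hx1 : x ≤ 1) :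
    √(2 * m * a) * x + m * x * (exp x - 1) ≤ √(2 * a * (m * x ^ 2)) + 2 * (m * x ^ 2) := by
  have hexp : exp x - 1 ≤ 2 * x := by
    have := abs_exp_sub_one_le (x := x) (by rwa [abs_of_nonneg hx0])
    rw [abs_of_nonneg hx0] at this
    exact (le_abs_self _).trans this
  have hsqrt : √(2 * m * a) * x = √(2 * a * (m * x ^ 2)) := by
    rw [show 2 * a * (m * x ^ 2) = 2 * m * a * x ^ 2 by ring, sqrt_mul' _ (sq_nonneg x),
      sqrt_sq hx0]
  nlinarith [mul_le_mul_of_nonneg_left hexp (mul_nonneg hm hx0)]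

lemma pow_mul_mul_div_sqrt_mul_sqrt_sq {κ lam k ε₀ : ℝ} {ℓ : ℕ} (hlam : 0 < lam) (hk : 0 < k)
    (hℓ : 1 ≤ ℓ) :
    κ ^ ℓ * k * (ε₀ / (√k * √(ℓ * lam ^ ℓ))) ^ 2 = ε₀ ^ 2 * (κ / lam) ^ ℓ / ℓ := by
  have hℓ' : (0 : ℝ) < ℓ := by exact_mod_cast hℓ
  rw [div_pow, mul_pow, sq_sqrt hk.le, sq_sqrt (by positivity), div_pow]
  field_simp

lemma log_two_pow_div_le {δ : ℝ} (hδ0 : 0 < δ) (hδ : δ ≤ 1 / 2) {ℓ : ℕ} (hℓ : 1 ≤ ℓ) :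
    log (2 ^ ℓ / δ) ≤ 2 * ℓ * log (1 / δ) := by
  have h2 : log 2 ≤ log (1 / δ) := log_le_log two_pos (by rw [le_div_iff₀ hδ0]; linarith)
  have hℓ' : (1 : ℝ) ≤ ℓ := by exact_mod_cast hℓ
  rw [← one_mul (2 ^ ℓ), mul_div_right_comm, log_mul (by positivity) (by positivity), log_pow]
  nlinarith [log_pos (one_lt_two : (1 : ℝ) < 2)]

lemma stage_cost_le {κ lam ρ k δ ε₀ : ℝ} {ℓ : ℕ} (hκ : 0 ≤ κ) (hlam : 0 < lam) (hρ0 : 0 ≤ ρ)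
    (hρ1 : ρ ≤ 1) (hκρ : κ / lam ≤ ρ ^ 2) (hk : 0 < k) (hδ0 : 0 < δ) (hδ : δ ≤ 1 / 2)
    (hε₀ : 0 ≤ ε₀) (hℓ : 1 ≤ ℓ) (hstage : ε₀ ^ 2 ≤ k * (ℓ * lam ^ ℓ)) :
    √(2 * (κ ^ ℓ * k) * log (2 ^ ℓ / δ)) * (ε₀ / (√k * √(ℓ * lam ^ ℓ))) +
        κ ^ ℓ * k * (ε₀ / (√k * √(ℓ * lam ^ ℓ))) *
          (exp (ε₀ / (√k * √(ℓ * lam ^ ℓ))) - 1) ≤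
      (2 * ε₀ * √(log (1 / δ)) + 2 * ε₀ ^ 2) * ρ ^ ℓ := by
  set x := ε₀ / (√k * √(ℓ * lam ^ ℓ)) with hx
  set c := log (1 / δ)
  have hℓ' : (1 : ℝ) ≤ ℓ := by exact_mod_cast hℓ
  have hx0 : 0 ≤ x := by positivity
  have hx1 : x ≤ 1 := by
    refine (pow_le_one_iff_of_nonneg hx0 two_ne_zero).mp ?_
    rw [hx, div_pow, mul_pow, sq_sqrt hk.le, sq_sqrt (by positivity)]
    exact div_le_one_of_le₀ hstage (by positivity)
  have hq : κ ^ ℓ * k * x ^ 2 ≤ ε₀ ^ 2 * ρ ^ (2 * ℓ) / ℓ := by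
    rw [pow_mul_mul_div_sqrt_mul_sqrt_sq hlam hk hℓ, pow_mul]
    gcongr
  have hc : 0 ≤ c := log_nonneg (by rw [le_div_iff₀ hδ0]; linarith)
  have hsq : √(2 * log (2 ^ ℓ / δ) * (κ ^ ℓ * k * x ^ 2)) ≤ 2 * ε₀ * √c * ρ ^ ℓ := by
    rw [sqrt_le_left (by positivity)]
    calc 2 * log (2 ^ ℓ / δ) * (κ ^ ℓ * k * x ^ 2)
        ≤ 2 * (2 * ℓ * c) * (ε₀ ^ 2 * ρ ^ (2 * ℓ) / ℓ) := by
          gcongr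
          exact log_two_pow_div_le hδ0 hδ hℓ
      _ = (2 * ε₀ * √c * ρ ^ ℓ) ^ 2 := by
          rw [mul_pow, mul_pow, sq_sqrt hc, ← pow_mul, mul_comm ℓ 2]; field_simp
  have hlin : κ ^ ℓ * k * x ^ 2 ≤ ε₀ ^ 2 * ρ ^ ℓ := by
    calc _ ≤ ε₀ ^ 2 * ρ ^ (2 * ℓ) / ℓ := hq
      _ ≤ ε₀ ^ 2 * ρ ^ (2 * ℓ) := div_le_self (by positivity) hℓ'
      _ ≤ ε₀ ^ 2 * ρ ^ ℓ :=
          mul_le_mul_of_nonneg_left (pow_le_pow_of_le_one hρ0 hρ1 (by omega)) (sq_nonneg _)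
  calc _ ≤ √(2 * log (2 ^ ℓ / δ) * (κ ^ ℓ * k * x ^ 2)) + 2 * (κ ^ ℓ * k * x ^ 2) :=
        sqrt_mul_add_mul_exp_sub_one_le (by positivity) hx0 hx1
    _ ≤ 2 * ε₀ * √c * ρ ^ ℓ + 2 * (ε₀ ^ 2 * ρ ^ ℓ) := by gcongr
    _ = _ := by ring

lemma log_pow_le_pow_mul {x : ℝ} (hx : 1 ≤ x) (n : ℕ) : log x ^ n ≤ n ^ n * x := by
  rcases n.eq_zero_or_pos with rfl | hn
  · simpa using hx
  have hn' : (0 : ℝ) < n := by exact_mod_cast hn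
  have hlog : log x ≤ n * x ^ (1 / n : ℝ) := by
    simpa [div_div_eq_mul_div, mul_comm] using log_le_rpow_div (by linarith) (one_div_pos.mpr hn')
  calc log x ^ n ≤ (n * x ^ (1 / n : ℝ)) ^ n := by gcongr; exact log_nonneg hx
    _ = n ^ n * x := by
      rw [mul_pow, ← rpow_natCast (x ^ _), ← rpow_mul (by linarith), one_div_mul_cancel hn'.ne',
        rpow_one]

lemma rpow_add_one_le_pow_ceil {lam B : ℝ} (h0 : 0 < lam) (h1 : lam ≤ 1) (hB : 0 ≤ B) :
    lam ^ (B + 1) ≤ lam ^ ⌈B⌉₊ := by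
  rw [← rpow_natCast]
  exact rpow_le_rpow_of_exponent_ge h0 h1 (Nat.ceil_lt_add_one hB).le

lemma one_div_le_mul_pow_ceil_log_log {k : ℕ} (hk : 3 ≤ k) :
    1 / 3300 ≤ (k : ℝ) * 0.95 ^ ⌈10 * log (log k) / log (1 / 0.9)⌉₊ := by
  have hk' : (3 : ℝ) ≤ k := by exact_mod_cast hk
  have hlogk : 1 ≤ log k := by
    rw [le_log_iff_exp_le (by linarith)]; linarith [exp_one_lt_d9]
  set y := log (log k)
  set B := 10 * y / log (1 / 0.9)
  have hy : 0 ≤ y := log_nonneg hlogk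
  have hden : 0 < log (1 / 0.9 : ℝ) := log_pos (by norm_num)
  have hB : -(5 * y) ≤ B * log 0.95 := by
    have h : 0 ≤ log (1 / 0.9 * 0.95 ^ 2 : ℝ) := log_nonneg (by norm_num)
    rw [log_mul (by norm_num) (by norm_num), log_pow] at h
    rw [div_mul_eq_mul_div, le_div_iff₀ hden]
    push_cast at h
    nlinarith [mul_le_mul_of_nonneg_left h hy]
  have hexp : exp (-(5 * y)) = (log k ^ 5)⁻¹ := by
    rw [exp_neg, show (5 : ℝ) * y = (5 : ℕ) * y by norm_num, exp_nat_mul, exp_log (by linarith)]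
  calc (1 : ℝ) / 3300 ≤ k * (0.95 * (5 ^ 5 * (k : ℝ))⁻¹) := by
        field_simp; norm_num
    _ ≤ k * (0.95 * exp (-(5 * y))) := by
        rw [hexp]; gcongr
        exact (log_pow_le_pow_mul (x := k) (by linarith) 5).trans_eq (by norm_num)
    _ ≤ k * (0.95 * exp (B * log 0.95)) := by gcongr
    _ = k * 0.95 ^ (B + 1) := by
        rw [rpow_add (by norm_num), rpow_one, rpow_def_of_pos (by norm_num),
          mul_comm (log _) B, mul_comm (exp _)]
    _ ≤ k * 0.95 ^ ⌈B⌉₊ := by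
        gcongr; exact rpow_add_one_le_pow_ceil (by norm_num) (by norm_num) (by positivity)

/-- The numerical computation underlying the privacy analysis of the Iterative Sparse
Vector Correction algorithm: with `κ = 0.9`, `λ = 0.95`, `L = ⌈10·log(log k)/log(1/κ)⌉`,
`ε₀ = ε/(1000·√(log(1/δ)))`, `m_ℓ = κ^ℓ·k`, and `ε_ℓ = ε₀/(√k·√(ℓ·λ^ℓ))`, the total
privacy cost `Σ_ℓ [√(2·m_ℓ·log(2^ℓ/δ))·ε_ℓ + m_ℓ·ε_ℓ·(e^{ε_ℓ} − 1)]` obtained from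
advanced composition is at most `ε`, and `Σ_ℓ 0.5^ℓ·δ ≤ δ`. -/
theorem iterative_svc_privacy_budget (ε δ : ℝ) (hε0 : 0 < ε) (hε1 : ε ≤ 1)
    (hδ0 : 0 < δ) (hδ1 : δ ≤ 0.5) (k : ℕ) (hk : 3 ≤ k) :
    let κ : ℝ := 0.9
    let lam : ℝ := 0.95
    let L : ℕ := ⌈10 * Real.log (Real.log k) / Real.log (1 / κ)⌉₊
    let ε₀ : ℝ := ε / (1000 * Real.sqrt (Real.log (1 / δ)))
    let m : ℕ → ℝ := fun ℓ => κ ^ ℓ * k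
    let εs : ℕ → ℝ := fun ℓ => ε₀ / (Real.sqrt k * Real.sqrt (ℓ * lam ^ ℓ))
    (∑ ℓ ∈ Finset.Icc 1 L,
        (Real.sqrt (2 * m ℓ * Real.log (2 ^ ℓ / δ)) * εs ℓ +
          m ℓ * εs ℓ * (Real.exp (εs ℓ) - 1)) ≤ ε) ∧
      (∑ ℓ ∈ Finset.Icc 1 L, (0.5 : ℝ) ^ ℓ * δ ≤ δ) := by
  intro κ lam L ε₀ m εs
  have hk0 : (0 : ℝ) < k := by exact_mod_cast (by omega : 0 < k)
  have hδ : δ ≤ 1 / 2 := by linarith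
  have hsqrt : 0.8 ≤ √(log (1 / δ)) := by
    refine le_sqrt_of_sq_le ((log_two_gt_d9.le.trans' (by norm_num)).trans ?_)
    exact log_le_log two_pos (by rw [le_div_iff₀ hδ0]; linarith)
  have hε₀0 : 0 ≤ ε₀ := by positivity
  have hε₀ : ε₀ ≤ ε / 800 := by
    rw [div_le_div_iff₀ (by positivity) (by norm_num)]; nlinarith
  have hε₀c : 2 * ε₀ * √(log (1 / δ)) = ε / 500 := by
    simp only [ε₀]; field_simp; ring
  have hstage : ∀ ℓ ∈ Icc 1 L, ε₀ ^ 2 ≤ k * (ℓ * lam ^ ℓ) := by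
    intro ℓ hℓ
    obtain ⟨hℓ1, hℓL⟩ := mem_Icc.mp hℓ
    calc ε₀ ^ 2 ≤ 1 / 3300 := by nlinarith
      _ ≤ k * lam ^ L := one_div_le_mul_pow_ceil_log_log hk
      _ ≤ k * lam ^ ℓ :=
        mul_le_mul_of_nonneg_left (pow_le_pow_of_le_one (by norm_num) (by norm_num) hℓL) hk0.le
      _ ≤ k * (ℓ * lam ^ ℓ) := by
        gcongr; exact le_mul_of_one_le_left (by positivity) (by exact_mod_cast hℓ1)
  refine ⟨?_, ?_⟩
  · calc _ ≤ ∑ ℓ ∈ Icc 1 L, (ε / 500 + 2 * ε₀ ^ 2) * (39 / 40) ^ ℓ := by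
          refine sum_le_sum fun ℓ hℓ => (stage_cost_le (ρ := 39 / 40) (by norm_num)
            (by norm_num) (by norm_num) (by norm_num) (by norm_num) hk0 hδ0 hδ hε₀0
            (mem_Icc.mp hℓ).1 (hstage ℓ hℓ)).trans_eq (by rw [hε₀c])
      _ = (ε / 500 + 2 * ε₀ ^ 2) * ∑ ℓ ∈ Icc 1 L, (39 / 40 : ℝ) ^ ℓ := (mul_sum ..).symm
      _ ≤ (ε / 500 + 2 * ε₀ ^ 2) * 39 := by
          gcongr; exact (sum_Icc_one_pow_le (by norm_num) (by norm_num) L).trans_eq (by norm_num)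
      _ ≤ ε := by nlinarith
  · rw [← sum_mul]
    nlinarith [sum_Icc_one_pow_le (r := (0.5 : ℝ)) (by norm_num) (by norm_num) L]
end

section
/- There is an absolute constant C > 0 such that for every integer k ≥ 3 and every ε_0 > 0 the following holds. Set κ = 0.9, λ = 0.95, L = ⌈10·log(log k)/log(1/κ)⌉, and for each ℓ with 1 ≤ ℓ ≤ L+1 set m_ℓ = κ^ℓ·k, ε_ℓ = ε_0/(√k·√(ℓ·λ^ℓ)), and w_ℓ = 100·log(500·k/m_ℓ)/ε_ℓ. Then Σ_{ℓ=1}^{L+1} w_ℓ ≤ C·√k/ε_0. -/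
/-!
Since `m_ℓ = κ^ℓ k`, the width is `w_ℓ = 100 (√k / ε₀) · log (500 / κ^ℓ) · √(ℓ λ^ℓ)`. The
factor after `√k / ε₀` is `O(ℓ² (√λ)^ℓ)` and `√λ < 1`, so it is summable over all `ℓ`; its
series bounds every partial sum, whatever the number of stages `L`.
-/

open Real Finset

lemma sqrt_natCast_mul_pow_le {lam : ℝ} (hlam : 0 ≤ lam) (n : ℕ) :
    √(n * lam ^ n) ≤ n * √lam ^ n := by
  rw [Real.sqrt_le_iff]
  refine ⟨by positivity, ?_⟩
  rw [mul_pow, ← pow_mul, mul_comm n 2, pow_mul, Real.sq_sqrt hlam]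
  have hn : (n : ℝ) ≤ n ^ 2 := by exact_mod_cast Nat.le_self_pow two_ne_zero n
  exact mul_le_mul_of_nonneg_right hn (by positivity)

lemma abs_log_div_pow_le {c κ : ℝ} (hc : c ≠ 0) (hκ : κ ≠ 0) (n : ℕ) :
    |log (c / κ ^ n)| ≤ |log c| + n * |log κ| := by
  rw [Real.log_div hc (pow_ne_zero n hκ), Real.log_pow]
  calc |log c - n * log κ| ≤ |log c| + |n * log κ| := abs_sub _ _
    _ = |log c| + n * |log κ| := by rw [abs_mul, Nat.abs_cast]

theorem summable_log_div_pow_mul_sqrt {c κ lam : ℝ} (hc : c ≠ 0) (hκ : κ ≠ 0)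
    (hlam0 : 0 ≤ lam) (hlam1 : lam < 1) :
    Summable fun n : ℕ => log (c / κ ^ n) * √(n * lam ^ n) := by
  have hr : ‖√lam‖ < 1 := by
    rw [Real.norm_of_nonneg (Real.sqrt_nonneg _), Real.sqrt_lt' one_pos, one_pow]
    exact hlam1
  refine Summable.of_norm_bounded
    (((summable_pow_mul_geometric_of_norm_lt_one 1 hr).mul_left |log c|).add
      ((summable_pow_mul_geometric_of_norm_lt_one 2 hr).mul_left |log κ|)) fun n => ?_
  rw [norm_mul, Real.norm_eq_abs, Real.norm_of_nonneg (Real.sqrt_nonneg _)]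
  calc |log (c / κ ^ n)| * √(n * lam ^ n)
      ≤ (|log c| + n * |log κ|) * (n * √lam ^ n) :=
        mul_le_mul (abs_log_div_pow_le hc hκ n) (sqrt_natCast_mul_pow_le hlam0 n)
          (Real.sqrt_nonneg _) (by positivity)
    _ = |log c| * ((n : ℝ) ^ 1 * √lam ^ n) + |log κ| * ((n : ℝ) ^ 2 * √lam ^ n) := by ring

/-- The numerical computation underlying the utility analysis of the Iterative Sparse
Vector Correction algorithm: with `κ = 0.9`, `λ = 0.95`, `L = ⌈10·log(log k)/log(1/κ)⌉`,
`m_ℓ = κ^ℓ·k`, `ε_ℓ = ε₀/(√k·√(ℓ·λ^ℓ))`, and `w_ℓ = 100·log(500·k/m_ℓ)/ε_ℓ`, the sum of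
the noise-width parameters satisfies `Σ_{ℓ=1}^{L+1} w_ℓ ≤ C·√k/ε₀` for an absolute
constant `C > 0`. -/
theorem iterative_svc_width_sum :
    ∃ C : ℝ, 0 < C ∧
      ∀ (k : ℕ), 3 ≤ k → ∀ ε₀ : ℝ, 0 < ε₀ →
      let κ : ℝ := 0.9
      let lam : ℝ := 0.95
      let L : ℕ := ⌈10 * Real.log (Real.log k) / Real.log (1 / κ)⌉₊
      let m : ℕ → ℝ := fun ℓ => κ ^ ℓ * k
      let εs : ℕ → ℝ := fun ℓ => ε₀ / (Real.sqrt k * Real.sqrt (ℓ * lam ^ ℓ))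
      let w : ℕ → ℝ := fun ℓ => 100 * Real.log (500 * k / m ℓ) / εs ℓ
      ∑ ℓ ∈ Finset.Icc 1 (L + 1), w ℓ ≤ C * Real.sqrt k / ε₀ := by
  set g : ℕ → ℝ := fun ℓ => log (500 / 0.9 ^ ℓ) * √(ℓ * 0.95 ^ ℓ)
  have hg : Summable g := summable_log_div_pow_mul_sqrt (by norm_num) (by norm_num)
    (by norm_num) (by norm_num)
  have hg0 (ℓ : ℕ) : 0 ≤ g ℓ := by
    refine mul_nonneg (log_nonneg ?_) (sqrt_nonneg _)
    rw [one_le_div (by positivity)]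
    exact (pow_le_one₀ (by norm_num) (by norm_num)).trans (by norm_num)
  have hg1 : 0 < g 1 := mul_pos (log_pos (by norm_num)) (sqrt_pos.2 (by norm_num))
  refine ⟨100 * ∑' ℓ, g ℓ, mul_pos (by norm_num) (hg.tsum_pos hg0 1 hg1), fun k _ ε₀ hε₀ => ?_⟩
  intro κ lam L m εs w
  have hw (ℓ : ℕ) : w ℓ = 100 * √k / ε₀ * g ℓ := by
    have hk0 : (k : ℝ) ≠ 0 := by positivity
    simp only [w, m, εs, κ, lam, g, mul_div_mul_right _ _ hk0]
    field_simp
  calc ∑ ℓ ∈ Icc 1 (L + 1), w ℓ = 100 * √k / ε₀ * ∑ ℓ ∈ Icc 1 (L + 1), g ℓ := by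
        rw [mul_sum]; exact sum_congr rfl fun ℓ _ => hw ℓ
    _ ≤ 100 * √k / ε₀ * ∑' ℓ, g ℓ :=
        mul_le_mul_of_nonneg_left (hg.sum_le_tsum _ fun ℓ _ => hg0 ℓ) (by positivity)
    _ = (100 * ∑' ℓ, g ℓ) * √k / ε₀ := by ring
end

section
/- Let Ω be a type of datasets with a symmetric neighboring relation, let m ≥ 1, and for each i = 1,…,m let O_i be a measurable space and let M_i be a measurable mechanism taking a dataset X ∈ Ω together with previous outcomes (o_1,…,o_{i−1}) ∈ O_1×…×O_{i−1} and returning a probability measure on O_i. Suppose there are ε_1,…,ε_m, δ_1,…,δ_m ≥ 0 such that for every i and every fixed (o_1,…,o_{i−1}), the mechanism X ↦ M_i(X; o_1,…,o_{i−1}) is (ε_i,δ_i)-DP. Then the composed mechanism mapping X to the joint distribution of (o_1,…,o_m), where o_i is drawn from M_i(X; o_1,…,o_{i−1}) sequentially, is (ε_1 + ⋯ + ε_m, δ_1 + ⋯ + δ_m)-DP. -/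
open MeasureTheory

/-- The sequential (adaptive) composition of the mechanisms
`M i : ((j : Fin i) → O j) → Measure (O i)`: the joint distribution of `(o_0, …, o_{m-1})`
where `o_i` is drawn from `M i (o_0, …, o_{i-1})` sequentially. -/
noncomputable def seqCompose (O : ℕ → Type) [∀ i, MeasurableSpace (O i)]
    (M : (i : ℕ) → ((j : Fin i) → O j) → Measure (O i)) :
    (m : ℕ) → Measure ((j : Fin m) → O j)
  | 0 => Measure.dirac (fun j => j.elim0)
  | m + 1 => (seqCompose O M m).bind fun o => (M m o).map (fun x => Fin.snoc o x)

/-!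
Induct on the number of mechanisms: the `(m+1)`-fold composition is the bind of the `m`-fold one
with the kernel `o ↦ M_m(o)` pushed forward along `Fin.snoc o`. If `μ S ≤ c ν S + d` for every
measurable `S`, the layer-cake formula `∫⁻ g dμ = ∫₀¹ μ {g > t} dt` extends this to
`∫⁻ g dμ ≤ c ∫⁻ g dν + d` for measurable `g ≤ 1`. Integrating the pointwise bound
`κ_X(o)(S) ≤ min 1 (c' κ_X'(o)(S)) + d'` against `μ_X` and applying this to the truncated
integrand multiplies the factors `e^ε` and adds the slacks `δ`.
-/

open Set ProbabilityTheory
open scoped ENNReal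

section

variable {α β γ : Type*} [MeasurableSpace α] [MeasurableSpace β] [MeasurableSpace γ]

lemma lintegral_eq_setLIntegral_Ioc_meas_lt {g : α → ℝ≥0∞} (hg : Measurable g)
    (hg1 : ∀ a, g a ≤ 1) (μ : Measure α) :
    ∫⁻ a, g a ∂μ = ∫⁻ t in Ioc (0 : ℝ) 1, μ {a | t < (g a).toReal} := by
  have hg_ne_top a : g a ≠ ∞ := ne_top_of_le_ne_top ENNReal.one_ne_top (hg1 a)
  have hempty : EqOn (fun t : ℝ => μ {a | t < (g a).toReal}) 0 (Ioi 1) := fun t ht => by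
    have : {a | t < (g a).toReal} = ∅ := eq_empty_of_forall_notMem fun a ha =>
      (ENNReal.toReal_le_of_le_ofReal zero_le_one (by simpa using hg1 a)).not_gt
        (lt_trans (mem_Ioi.mp ht) ha)
    simp [this]
  calc ∫⁻ a, g a ∂μ = ∫⁻ a, ENNReal.ofReal (g a).toReal ∂μ := by
        simp_rw [ENNReal.ofReal_toReal (hg_ne_top _)]
    _ = ∫⁻ t in Ioi 0, μ {a | t < (g a).toReal} :=
        lintegral_eq_lintegral_meas_lt μ (.of_forall fun _ => ENNReal.toReal_nonneg)
          hg.ennreal_toReal.aemeasurable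
    _ = ∫⁻ t in Ioc 0 1, μ {a | t < (g a).toReal} := by
        rw [← Ioc_union_Ioi_eq_Ioi zero_le_one, lintegral_union measurableSet_Ioi
          Ioc_disjoint_Ioi_same, setLIntegral_eq_zero measurableSet_Ioi hempty, add_zero]

lemma lintegral_le_mul_lintegral_add_of_forall_le {μ ν : Measure α} {c d : ℝ≥0∞}
    (h : ∀ s, MeasurableSet s → μ s ≤ c * ν s + d) {g : α → ℝ≥0∞} (hg : Measurable g)
    (hg1 : ∀ a, g a ≤ 1) :
    ∫⁻ a, g a ∂μ ≤ c * ∫⁻ a, g a ∂ν + d := by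
  have hν : Measurable fun t : ℝ => ν {a | t < (g a).toReal} :=
    Antitone.measurable fun t t' htt' => measure_mono fun a (ha : t' < _) => htt'.trans_lt ha
  rw [lintegral_eq_setLIntegral_Ioc_meas_lt hg hg1, lintegral_eq_setLIntegral_Ioc_meas_lt hg hg1]
  calc ∫⁻ t in Ioc 0 1, μ {a | t < (g a).toReal}
      ≤ ∫⁻ t in Ioc 0 1, (c * ν {a | t < (g a).toReal} + d) :=
        lintegral_mono fun t => h _ (measurableSet_lt measurable_const hg.ennreal_toReal)
    _ = c * (∫⁻ t in Ioc 0 1, ν {a | t < (g a).toReal}) + d := by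
        rw [lintegral_add_right _ measurable_const, lintegral_const_mul _ hν, setLIntegral_const,
          Real.volume_Ioc, sub_zero, ENNReal.ofReal_one, mul_one]

lemma bind_apply_le_mul_bind_apply_add {μ ν : Measure α} [IsProbabilityMeasure μ]
    {κ η : α → Measure β} [∀ a, IsProbabilityMeasure (κ a)] (hκ : Measurable κ)
    (hη : Measurable η) {c d c' d' : ℝ≥0∞}
    (hμν : ∀ s, MeasurableSet s → μ s ≤ c * ν s + d)
    (hκη : ∀ a s, MeasurableSet s → κ a s ≤ c' * η a s + d') {s : Set β} (hs : MeasurableSet s) :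
    μ.bind κ s ≤ c * c' * ν.bind η s + (d + d') := by
  set g : α → ℝ≥0∞ := fun a => min 1 (c' * η a s)
  have hηs : Measurable fun a => η a s := Measure.measurable_measure.mp hη s hs
  have hg : Measurable g := measurable_const.min (hηs.const_mul c')
  -- Truncating at `1` (harmless since `κ a s ≤ 1`) is what makes the layer-cake bound apply.
  have hκg a : κ a s ≤ g a + d' := calc
    κ a s ≤ min (1 + d') (c' * η a s + d') :=
      le_min (prob_le_one.trans le_self_add) (hκη a s hs)
    _ = g a + d' := min_add_add_right _ _ _
  calc μ.bind κ s = ∫⁻ a, κ a s ∂μ := Measure.bind_apply hs hκ.aemeasurable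
    _ ≤ ∫⁻ a, (g a + d') ∂μ := lintegral_mono hκg
    _ = ∫⁻ a, g a ∂μ + d' := by rw [lintegral_add_right _ measurable_const, lintegral_const,
          measure_univ, mul_one]
    _ ≤ c * ∫⁻ a, g a ∂ν + d + d' := by
        gcongr; exact lintegral_le_mul_lintegral_add_of_forall_le hμν hg fun a => min_le_left _ _
    _ ≤ c * ∫⁻ a, c' * η a s ∂ν + d + d' := by gcongr with a; exact min_le_right _ _
    _ = c * c' * ν.bind η s + (d + d') := by
        rw [lintegral_const_mul _ hηs,
          Measure.bind_apply hs hη.aemeasurable, mul_assoc, add_assoc]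

lemma map_apply_le_mul_map_apply_add {μ ν : Measure α} {f : α → β} (hf : Measurable f)
    {c d : ℝ≥0∞} (h : ∀ s, MeasurableSet s → μ s ≤ c * ν s + d) {s : Set β}
    (hs : MeasurableSet s) : μ.map f s ≤ c * ν.map f s + d := by
  rw [Measure.map_apply hf hs, Measure.map_apply hf hs]
  exact h _ (hf hs)

lemma measurable_map_of_measurable_uncurry {κ : α → Measure β} [∀ a, IsProbabilityMeasure (κ a)]
    (hκ : Measurable κ) {f : α → β → γ} (hf : Measurable (Function.uncurry f)) :
    Measurable fun a => (κ a).map (f a) := by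
  let K : Kernel α β := ⟨κ, hκ⟩
  have : IsMarkovKernel K := ⟨inferInstance⟩
  refine Measure.measurable_of_measurable_coe _ fun s hs => ?_
  simp_rw [Measure.map_apply hf.of_uncurry_left hs]
  exact K.measurable_kernel_prodMk_left (hf hs)

end

lemma measurable_uncurry_snoc {m : ℕ} (O : ℕ → Type) [∀ i, MeasurableSpace (O i)] :
    Measurable (Function.uncurry fun (o : (j : Fin m) → O j) (x : O m) =>
      (Fin.snoc o x : (j : Fin (m + 1)) → O j)) := by
  refine measurable_pi_lambda _ fun j => j.lastCases ?_ fun i => ?_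
  · simpa [Function.uncurry_def] using measurable_snd
  · simp only [Function.uncurry_def, Fin.snoc_castSucc]
    exact (measurable_pi_apply i).comp measurable_fst

section

variable (O : ℕ → Type) [∀ i, MeasurableSpace (O i)]

lemma measurable_snoc {m : ℕ} (o : (j : Fin m) → O j) :
    Measurable fun x : O m => (Fin.snoc o x : (j : Fin (m + 1)) → O j) :=
  (measurable_uncurry_snoc O).of_uncurry_left

lemma measurable_map_snoc {m : ℕ} {κ : ((j : Fin m) → O j) → Measure (O m)}
    [∀ o, IsProbabilityMeasure (κ o)] (hκ : Measurable κ) :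
    Measurable fun o => (κ o).map fun x => (Fin.snoc o x : (j : Fin (m + 1)) → O j) :=
  measurable_map_of_measurable_uncurry hκ (measurable_uncurry_snoc O)

instance isProbabilityMeasure_map_snoc {m : ℕ} (o : (j : Fin m) → O j) (μ : Measure (O m))
    [IsProbabilityMeasure μ] :
    IsProbabilityMeasure (μ.map fun x => (Fin.snoc o x : (j : Fin (m + 1)) → O j)) :=
  Measure.isProbabilityMeasure_map (measurable_snoc O o).aemeasurable

lemma isProbabilityMeasure_seqCompose (M : (i : ℕ) → ((j : Fin i) → O j) → Measure (O i))
    (m : ℕ) (hprob : ∀ i, i < m → ∀ o, IsProbabilityMeasure (M i o))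
    (hmeas : ∀ i, i < m → Measurable (M i)) :
    IsProbabilityMeasure (seqCompose O M m) := by
  induction m with
  | zero => exact Measure.dirac.isProbabilityMeasure
  | succ m ih =>
    have := ih (fun i hi => hprob i (by omega)) (fun i hi => hmeas i (by omega))
    have := hprob m m.lt_succ_self
    exact isProbabilityMeasure_bind (measurable_map_snoc O (hmeas m m.lt_succ_self)).aemeasurable
      (.of_forall fun o => inferInstance)

end

theorem basic_composition_general (Ω : Type) (N : Ω → Ω → Prop)
    (m : ℕ) (O : ℕ → Type) [∀ i, MeasurableSpace (O i)]
    (M : (i : ℕ) → Ω → ((j : Fin i) → O j) → Measure (O i))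
    (ε δ : ℕ → ℝ) (hδ : ∀ i, i < m → 0 ≤ δ i)
    (hprob : ∀ i, i < m → ∀ X o, IsProbabilityMeasure (M i X o))
    (hmeas : ∀ i, i < m → ∀ X, Measurable fun o => M i X o)
    (hDP : ∀ i, i < m → ∀ o, IsDP N (fun X => M i X o) (ε i) (δ i)) :
    IsDP N (fun X => seqCompose O (fun i o => M i X o) m)
      (∑ i ∈ Finset.range m, ε i) (∑ i ∈ Finset.range m, δ i) := by
  induction m with
  | zero => intro X X' _ s _; simp [seqCompose]
  | succ m ih =>
    intro X X' hN s hs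
    have hlast := m.lt_succ_self
    have := isProbabilityMeasure_seqCompose O (fun i o => M i X o) m
      (fun i hi => hprob i (by omega) X) (fun i hi => hmeas i (by omega) X)
    have := hprob m hlast
    have hprefix := ih (fun i hi => hδ i (by omega)) (fun i hi => hprob i (by omega))
      (fun i hi => hmeas i (by omega)) (fun i hi => hDP i (by omega)) X X' hN
    have hδsum : 0 ≤ ∑ i ∈ Finset.range m, δ i :=
      Finset.sum_nonneg fun i hi => hδ i ((Finset.mem_range.mp hi).trans hlast)
    rw [Finset.sum_range_succ, Finset.sum_range_succ, Real.exp_add,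
      ENNReal.ofReal_mul (Real.exp_nonneg _), ENNReal.ofReal_add hδsum (hδ m hlast)]
    exact bind_apply_le_mul_bind_apply_add (measurable_map_snoc O (hmeas m hlast X))
      (measurable_map_snoc O (hmeas m hlast X')) hprefix
      (fun o _ => map_apply_le_mul_map_apply_add (measurable_snoc O o) (hDP m hlast o X X' hN)) hs

/-- Basic composition: the sequential (adaptive) composition of `m` mechanisms, the `i`-th
of which is `(ε i, δ i)`-DP for every fixed tuple of previous outcomes, is
`(ε 0 + ⋯ + ε (m-1), δ 0 + ⋯ + δ (m-1))`-DP. -/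
theorem basic_composition (Ω : Type) (N : Ω → Ω → Prop) (hsym : ∀ X X', N X X' → N X' X)
    (m : ℕ) (hm : 1 ≤ m) (O : ℕ → Type) [∀ i, MeasurableSpace (O i)]
    (M : (i : ℕ) → Ω → ((j : Fin i) → O j) → Measure (O i))
    (ε δ : ℕ → ℝ) (hε : ∀ i, i < m → 0 ≤ ε i) (hδ : ∀ i, i < m → 0 ≤ δ i)
    (hprob : ∀ i, i < m → ∀ X o, IsProbabilityMeasure (M i X o))
    (hmeas : ∀ i, i < m → ∀ X, Measurable fun o => M i X o)
    (hDP : ∀ i, i < m → ∀ o, IsDP N (fun X => M i X o) (ε i) (δ i)) :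
    IsDP N (fun X => seqCompose O (fun i o => M i X o) m)
      (∑ i ∈ Finset.range m, ε i) (∑ i ∈ Finset.range m, δ i) :=
  basic_composition_general Ω N m O M ε δ hδ hprob hmeas hDP
end
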